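/- arXiv:1104.1810 — 4 statements merged into one kernel-verified Lean document; each statement's English description precedes it below -/
import Mathlib

section
/- Let G be a compact group acting continuously on the right on a compact Hausdorff space X. If the action of G on C(X) is ergodic, i.e., the only continuous functions f : X → ℝ satisfying f(x·s) = f(x) for all x ∈ X and s ∈ G are the constant functions, then the action of G on X is transitive: for every x ∈ X, the orbit O_x = {x·s : s ∈ G} equals X. -/
/-! If `y` lies outside the orbit of `x`, then the orbit is compact, hence closed, and Urysohn's
lemma gives `g : C(X, ℝ)` with values in `[0, 1]`, vanishing on the orbit of `x` and equal to `1`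
at `y`. Its supremum `z ↦ ⨆ s, g (z · s)` along orbits is invariant and, by compactness of `G`,
continuous, yet it is `0` at `x` and `1` at `y`, so the action is not ergodic. -/

open Set

section OrbitSup

variable {G X : Type*} (act : X → G → X)

noncomputable def orbitSup (g : X → ℝ) (z : X) : ℝ := ⨆ s, g (act z s)

theorem continuous_orbitSup [TopologicalSpace G] [CompactSpace G] [TopologicalSpace X]
    (h_cont : Continuous fun p : X × G => act p.1 p.2)
    {g : X → ℝ} (hg : Continuous g) : Continuous (orbitSup act g) := by
  have h := isCompact_univ.continuous_sSup (f := fun z s => g (act z s)) (hg.comp h_cont)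
  simp only [image_univ] at h
  exact h

theorem orbitSup_act [Group G] (h_mul : ∀ (x : X) (s t : G), act (act x s) t = act x (s * t))
    (g : X → ℝ) (z : X) (t : G) : orbitSup act g (act z t) = orbitSup act g z := by
  simp only [orbitSup, h_mul]
  exact (mul_left_surjective t).iSup_comp fun s => g (act z s)

theorem le_orbitSup [TopologicalSpace X] [CompactSpace X] {g : X → ℝ} (hg : Continuous g)
    (z : X) (s : G) : g (act z s) ≤ orbitSup act g z :=
  le_ciSup ((isCompact_range hg).bddAbove.mono (range_comp_subset_range _ g)) s

theorem orbitSup_eq_zero {g : X → ℝ} {x : X} (hg : ∀ s, g (act x s) = 0) :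
    orbitSup act g x = 0 := by
  simp only [orbitSup, hg, Real.iSup_const_zero]

theorem exists_invariant_ne_of_notMem_orbit [Group G] [TopologicalSpace G] [CompactSpace G]
    [TopologicalSpace X] [CompactSpace X] [T2Space X]
    (h_cont : Continuous fun p : X × G => act p.1 p.2)
    (h_one : ∀ x : X, act x 1 = x)
    (h_mul : ∀ (x : X) (s t : G), act (act x s) t = act x (s * t))
    {x y : X} (hy : y ∉ range (act x)) :
    ∃ f : C(X, ℝ), (∀ (z : X) (s : G), f (act z s) = f z) ∧ f x ≠ f y := by
  have horbit_closed : IsClosed (range (act x)) :=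
    (isCompact_range (h_cont.comp (Continuous.prodMk_right x))).isClosed
  obtain ⟨g, hg_orbit, hg_y, -⟩ := exists_continuous_zero_one_of_isClosed horbit_closed
    isClosed_singleton (disjoint_singleton_right.mpr hy)
  refine ⟨⟨orbitSup act g, continuous_orbitSup act h_cont g.continuous⟩,
    orbitSup_act act h_mul g, ?_⟩
  have hx : orbitSup act g x = 0 := orbitSup_eq_zero act fun s => hg_orbit ⟨s, rfl⟩
  have hy_one : 1 ≤ orbitSup act g y := by
    simpa [h_one, hg_y rfl] using le_orbitSup act g.continuous y 1
  change orbitSup act g x ≠ orbitSup act g y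
  linarith

end OrbitSup

theorem ergodic_action_of_compact_group_is_transitive_general
    {G : Type*} [Group G] [TopologicalSpace G] [CompactSpace G]
    {X : Type*} [TopologicalSpace X] [CompactSpace X] [T2Space X]
    (act : X → G → X)
    (h_cont : Continuous fun p : X × G => act p.1 p.2)
    (h_one : ∀ x : X, act x 1 = x)
    (h_mul : ∀ (x : X) (s t : G), act (act x s) t = act x (s * t))
    (h_erg : ∀ f : C(X, ℝ), (∀ (x : X) (s : G), f (act x s) = f x) →
      ∃ c : ℝ, ∀ x : X, f x = c) :
    ∀ x : X, {y : X | ∃ s : G, y = act x s} = Set.univ := by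
  intro x
  refine eq_univ_of_forall fun y => ?_
  by_contra hy
  obtain ⟨f, hf_inv, hf_ne⟩ := exists_invariant_ne_of_notMem_orbit act h_cont h_one h_mul
    (y := y) fun ⟨s, hs⟩ => hy ⟨s, hs.symm⟩
  obtain ⟨c, hc⟩ := h_erg f hf_inv
  exact hf_ne ((hc x).trans (hc y).symm)

/-- **Ergodicity implies transitivity for compact group actions.**
Let `G` be a compact (topological) group acting continuously on the right on a
compact Hausdorff space `X` (the action is given by `act : X → G → X`).  If the
induced action on `C(X)` is ergodic, i.e. the only continuous real-valued
functions `f` on `X` with `f (x · s) = f x` for all `x, s` are the constants,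
then the action is transitive: every orbit is all of `X`. -/
theorem ergodic_action_of_compact_group_is_transitive
    {G : Type*} [Group G] [TopologicalSpace G] [IsTopologicalGroup G] [CompactSpace G]
    {X : Type*} [TopologicalSpace X] [CompactSpace X] [T2Space X]
    (act : X → G → X)
    (h_cont : Continuous fun p : X × G => act p.1 p.2)
    (h_one : ∀ x : X, act x 1 = x)
    (h_mul : ∀ (x : X) (s t : G), act (act x s) t = act x (s * t))
    (h_erg : ∀ f : C(X, ℝ), (∀ (x : X) (s : G), f (act x s) = f x) →
      ∃ c : ℝ, ∀ x : X, f x = c) :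
    ∀ x : X, {y : X | ∃ s : G, y = act x s} = Set.univ :=
  ergodic_action_of_compact_group_is_transitive_general act h_cont h_one h_mul h_erg
end

section
/- Let G be a compact group acting continuously on the right on a compact Hausdorff space X, and suppose the action of G on C(X) is ergodic, i.e., the only continuous functions f : X → ℝ satisfying f(x·s) = f(x) for all x ∈ X and s ∈ G are the constants. Fix x₀ ∈ X and let G_{x₀} = {s ∈ G : x₀·s = x₀} be the stabilizer of x₀. Then G_{x₀} is a closed subgroup of G, and the right coset space G_{x₀}\G, equipped with the quotient topology, is homeomorphic to X via the map G_{x₀}s ↦ x₀·s. -/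
/-!
If two orbits were distinct they would be disjoint compact sets, and an Urysohn function `g`
equal to `0` on one and `1` on the other yields the continuous invariant function
`x ↦ ⨆ s, g (x · s)`, which takes the values `0` and `1`; so ergodicity forces the action to be
transitive. The orbit map `G → X` then descends to a continuous bijection from the compact coset
space `G_{x₀}\G` onto the Hausdorff space `X`, hence a homeomorphism.
-/

open Set

section RightAction

variable {G X : Type*} (act : X → G → X)

theorem continuous_iSup_comp_act [TopologicalSpace G] [CompactSpace G] [TopologicalSpace X]
    (h_cont : Continuous fun p : X × G => act p.1 p.2)
    (g : C(X, ℝ)) : Continuous fun x => ⨆ s, g (act x s) := by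
  have h_sSup :=
    isCompact_univ.continuous_sSup (f := fun x s => g (act x s)) (g.continuous.comp h_cont)
  simp only [image_univ] at h_sSup
  exact h_sSup

variable [Group G]

def rightStabilizer (h_one : ∀ x, act x 1 = x) (h_mul : ∀ x s t, act (act x s) t = act x (s * t))
    (x₀ : X) : Subgroup G where
  carrier := {s | act x₀ s = x₀}
  one_mem' := h_one x₀
  mul_mem' {a b} (ha : act x₀ a = x₀) (hb : act x₀ b = x₀) :=
    show act x₀ (a * b) = x₀ by rw [← h_mul, ha, hb]
  inv_mem' {a} (ha : act x₀ a = x₀) := show act x₀ a⁻¹ = x₀ by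
    conv_lhs => rw [← ha]
    rw [h_mul, mul_inv_cancel, h_one]

theorem rightRel_rightStabilizer_iff (h_one : ∀ x, act x 1 = x)
    (h_mul : ∀ x s t, act (act x s) t = act x (s * t)) (x₀ : X) (a b : G) :
    QuotientGroup.rightRel (rightStabilizer act h_one h_mul x₀) a b ↔ act x₀ a = act x₀ b := by
  rw [QuotientGroup.rightRel_apply]
  change act x₀ (b * a⁻¹) = x₀ ↔ _
  constructor
  · intro h
    rw [← inv_mul_cancel_right b a, ← h_mul, h]
  · intro h
    rw [← h_mul, ← h, h_mul, mul_inv_cancel, h_one]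

theorem range_act_act (h_mul : ∀ x s t, act (act x s) t = act x (s * t)) (x : X) (s : G) :
    range (act (act x s)) = range (act x) := by
  ext z
  constructor
  · rintro ⟨t, rfl⟩
    exact ⟨s * t, (h_mul x s t).symm⟩
  · rintro ⟨t, rfl⟩
    exact ⟨s⁻¹ * t, by rw [h_mul, mul_inv_cancel_left]⟩

theorem disjoint_range_act_of_notMem_range (h_one : ∀ x, act x 1 = x)
    (h_mul : ∀ x s t, act (act x s) t = act x (s * t)) {x y : X} (hy : y ∉ range (act x)) :
    Disjoint (range (act x)) (range (act y)) := by
  refine disjoint_left.mpr ?_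
  rintro _ ⟨s, rfl⟩ ⟨t, hts⟩
  apply hy
  rw [← range_act_act act h_mul x s, ← hts, range_act_act act h_mul]
  exact ⟨1, h_one y⟩

variable [TopologicalSpace G] [CompactSpace G] [TopologicalSpace X]

theorem act_surjective_of_ergodic [CompactSpace X] [T2Space X]
    (h_cont : Continuous fun p : X × G => act p.1 p.2) (h_one : ∀ x, act x 1 = x)
    (h_mul : ∀ x s t, act (act x s) t = act x (s * t))
    (h_erg : ∀ f : C(X, ℝ), (∀ x s, f (act x s) = f x) → ∃ c : ℝ, ∀ x, f x = c) (x : X) :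
    Function.Surjective (act x) := by
  intro y
  by_contra hy
  have h_orbit_compact (z : X) : IsCompact (range (act z)) :=
    isCompact_range (h_cont.comp (.prodMk_right z))
  obtain ⟨g, hg_zero, hg_one, -⟩ := exists_continuous_zero_one_of_isCompact (h_orbit_compact x)
    (h_orbit_compact y).isClosed (disjoint_range_act_of_notMem_range act h_one h_mul hy)
  set f : C(X, ℝ) := ⟨fun z => ⨆ s, g (act z s), continuous_iSup_comp_act act h_cont g⟩
  have hf_inv (z : X) (s : G) : f (act z s) = f z := by
    change sSup (range (g ∘ act (act z s))) = sSup (range (g ∘ act z))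
    rw [range_comp, range_act_act act h_mul, ← range_comp]
  have hf_x : f x = 0 :=
    (iSup_congr fun s => (hg_zero (mem_range_self s) : g (act x s) = 0)).trans ciSup_const
  have hf_y : f y = 1 :=
    (iSup_congr fun s => (hg_one (mem_range_self s) : g (act y s) = 1)).trans ciSup_const
  obtain ⟨c, hc⟩ := h_erg f hf_inv
  exact zero_ne_one (by rw [← hf_x, ← hf_y, hc x, hc y])

theorem exists_homeomorph_quotient_rightStabilizer [T2Space X] (h_one : ∀ x, act x 1 = x)
    (h_mul : ∀ x s t, act (act x s) t = act x (s * t)) (x₀ : X) (h_act : Continuous (act x₀))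
    (h_surj : Function.Surjective (act x₀)) :
    ∃ φ : Quotient (QuotientGroup.rightRel (rightStabilizer act h_one h_mul x₀)) ≃ₜ X,
      ∀ s, φ (Quotient.mk _ s) = act x₀ s := by
  let q := Quotient.lift (act x₀) fun a b =>
    (rightRel_rightStabilizer_iff act h_one h_mul x₀ a b).mp
  have hq_bij : Function.Bijective q := by
    refine ⟨?_, h_surj.of_comp (g := Quotient.mk _)⟩
    rintro ⟨a⟩ ⟨b⟩ hab
    exact Quotient.sound ((rightRel_rightStabilizer_iff act h_one h_mul x₀ a b).mpr hab)
  exact ⟨(h_act.quotient_lift _).homeoOfEquivCompactToT2 (f := Equiv.ofBijective q hq_bij),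
    fun _ => rfl⟩

end RightAction

theorem ergodic_action_homeomorph_coset_space_general
    {G : Type*} [Group G] [TopologicalSpace G] [CompactSpace G]
    {X : Type*} [TopologicalSpace X] [CompactSpace X] [T2Space X]
    (act : X → G → X)
    (h_cont : Continuous fun p : X × G => act p.1 p.2)
    (h_one : ∀ x : X, act x 1 = x)
    (h_mul : ∀ (x : X) (s t : G), act (act x s) t = act x (s * t))
    (h_erg : ∀ f : C(X, ℝ), (∀ (x : X) (s : G), f (act x s) = f x) →
      ∃ c : ℝ, ∀ x : X, f x = c)
    (x₀ : X) :
    ∃ H : Subgroup G, (H : Set G) = {s : G | act x₀ s = x₀} ∧ IsClosed (H : Set G) ∧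
      ∃ φ : Quotient (QuotientGroup.rightRel H) ≃ₜ X,
        ∀ s : G, φ (Quotient.mk (QuotientGroup.rightRel H) s) = act x₀ s := by
  have h_act : Continuous (act x₀) := h_cont.comp (.prodMk_right x₀)
  exact ⟨rightStabilizer act h_one h_mul x₀, rfl, isClosed_singleton.preimage h_act,
    exists_homeomorph_quotient_rightStabilizer act h_one h_mul x₀ h_act
      (act_surjective_of_ergodic act h_cont h_one h_mul h_erg x₀)⟩

/-- **Ergodic compact group actions are homogeneous spaces.**
Let `G` be a compact group acting continuously on the right on a compact Hausdorff
space `X`, and suppose the induced action on `C(X)` is ergodic (the only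
`G`-invariant continuous real functions are constants).  Fix `x₀ ∈ X`.  Then the
stabilizer `G_{x₀} = {s : G | x₀ · s = x₀}` is a closed subgroup of `G`, and the
right coset space `G_{x₀}\G` (with the quotient topology) is homeomorphic to `X`
via the map `G_{x₀} s ↦ x₀ · s`. -/
theorem ergodic_action_homeomorph_coset_space
    {G : Type*} [Group G] [TopologicalSpace G] [IsTopologicalGroup G] [CompactSpace G]
    {X : Type*} [TopologicalSpace X] [CompactSpace X] [T2Space X]
    (act : X → G → X)
    (h_cont : Continuous fun p : X × G => act p.1 p.2)
    (h_one : ∀ x : X, act x 1 = x)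
    (h_mul : ∀ (x : X) (s t : G), act (act x s) t = act x (s * t))
    (h_erg : ∀ f : C(X, ℝ), (∀ (x : X) (s : G), f (act x s) = f x) →
      ∃ c : ℝ, ∀ x : X, f x = c)
    (x₀ : X) :
    ∃ H : Subgroup G, (H : Set G) = {s : G | act x₀ s = x₀} ∧ IsClosed (H : Set G) ∧
      ∃ φ : Quotient (QuotientGroup.rightRel H) ≃ₜ X,
        ∀ s : G, φ (Quotient.mk (QuotientGroup.rightRel H) s) = act x₀ s :=
  ergodic_action_homeomorph_coset_space_general act h_cont h_one h_mul h_erg x₀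
end

section
/- Let G be a second countable compact group acting continuously on the right on a compact Hausdorff space X. Suppose the action of G on C(X) given by (σ_s f)(x) = f(x·s) is ergodic, i.e., the only continuous functions f : X → ℝ satisfying f(x·s) = f(x) for all x ∈ X and s ∈ G are the constants. Then X is a second countable topological space. -/
/-!
Ergodicity forces the action to be transitive: if `y` is not in the (compact, hence closed)
orbit of `x`, take an Urysohn function `f` vanishing on that orbit with `f y = 1`; then
`x ↦ ⨆ g, f (g • x)` is a continuous invariant function taking the values `0` at `x` and at
least `1` at `y`. A transitive action of a compact group on a Hausdorff space identifies the
space with the quotient `G ⧸ stabilizer G x`, and quotients of a second countable group are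
second countable.
-/

open Set

namespace MulAction

theorem bijective_ofQuotientStabilizer {G X : Type*} [Group G] [MulAction G X]
    [IsPretransitive G X] (x : X) : Function.Bijective (ofQuotientStabilizer G x) :=
  ⟨injective_ofQuotientStabilizer G x, fun y =>
    let ⟨g, hg⟩ := exists_smul_eq G x y; ⟨g, hg⟩⟩

theorem continuous_ofQuotientStabilizer {G X : Type*} [Group G] [TopologicalSpace G]
    [TopologicalSpace X] [MulAction G X] [ContinuousSMul G X] (x : X) :
    Continuous (ofQuotientStabilizer G x) :=
  continuous_quot_lift _ (continuous_id.smul continuous_const)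

theorem iSup_comp_smul_smul {G X : Type*} [Group G] [MulAction G X] (f : X → ℝ) (h : G) (x : X) :
    ⨆ g : G, f (g • h • x) = ⨆ g : G, f (g • x) := by
  simp only [smul_smul]
  exact (Equiv.mulRight h).iSup_comp (g := fun g => f (g • x))

variable {G X : Type*} [Group G] [TopologicalSpace G] [CompactSpace G]
  [TopologicalSpace X] [MulAction G X] [ContinuousSMul G X]

theorem isCompact_orbit (x : X) : IsCompact (orbit G x) :=
  isCompact_range (continuous_id.smul continuous_const)

theorem continuous_iSup_comp_smul (f : C(X, ℝ)) :
    Continuous fun x : X => ⨆ g : G, f (g • x) := by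
  simp only [iSup, ← image_univ]
  exact isCompact_univ.continuous_sSup (f.continuous.comp (continuous_snd.smul continuous_fst))

theorem isPretransitive_of_forall_invariant_eq_const [CompactSpace X] [T2Space X]
    (h : ∀ f : C(X, ℝ), (∀ (g : G) (x : X), f (g • x) = f x) → ∃ c : ℝ, ∀ x, f x = c) :
    IsPretransitive G X := by
  refine ⟨fun x y => ?_⟩
  by_contra hyx
  obtain ⟨f, hf0, hf1, -⟩ := exists_continuous_zero_one_of_isClosed
    (isCompact_orbit (G := G) x).isClosed isClosed_singleton
    (disjoint_singleton_right.2 fun ⟨g, hg⟩ => hyx ⟨g, hg⟩)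
  obtain ⟨c, hc⟩ := h ⟨_, continuous_iSup_comp_smul (G := G) f⟩
    fun g x => iSup_comp_smul_smul f g x
  have hfx : ⨆ g : G, f (g • x) = 0 := by
    simp [fun g : G => hf0 (mem_orbit x g)]
  have hfy : 1 ≤ ⨆ g : G, f (g • y) := by
    have hbdd : BddAbove (range fun g : G => f (g • y)) :=
      (isCompact_range (f.continuous.comp (continuous_id.smul continuous_const))).bddAbove
    simpa [hf1 rfl] using le_ciSup hbdd 1
  have : (⨆ g : G, f (g • y)) = ⨆ g : G, f (g • x) := (hc y).trans (hc x).symm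
  linarith

variable (G) in
noncomputable def quotientStabilizerHomeomorph [T2Space X] [IsPretransitive G X] (x : X) :
    G ⧸ stabilizer G x ≃ₜ X :=
  (continuous_ofQuotientStabilizer x).homeoOfEquivCompactToT2
    (f := Equiv.ofBijective _ (bijective_ofQuotientStabilizer x))

theorem secondCountableTopology_of_isPretransitive [ContinuousMul G] [SecondCountableTopology G]
    [T2Space X] [IsPretransitive G X] : SecondCountableTopology X := by
  rcases isEmpty_or_nonempty X with hX | ⟨⟨x⟩⟩
  · exact (TopologicalSpace.isTopologicalBasis_empty.2 hX).secondCountableTopology countable_empty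
  · exact (quotientStabilizerHomeomorph G x).symm.secondCountableTopology

end MulAction

/-- **Second countability of ergodic quotients.**
Let `G` be a second countable compact group acting continuously on the right on a
compact Hausdorff space `X`.  If the induced action of `G` on `C(X)` is ergodic
(the only `G`-invariant continuous real functions are the constants), then `X` is
second countable. -/
theorem secondCountable_of_ergodic_compact_group_action
    {G : Type*} [Group G] [TopologicalSpace G] [IsTopologicalGroup G] [CompactSpace G]
    [SecondCountableTopology G]
    {X : Type*} [TopologicalSpace X] [CompactSpace X] [T2Space X]
    (act : X → G → X)
    (h_cont : Continuous fun p : X × G => act p.1 p.2)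
    (h_one : ∀ x : X, act x 1 = x)
    (h_mul : ∀ (x : X) (s t : G), act (act x s) t = act x (s * t))
    (h_erg : ∀ f : C(X, ℝ), (∀ (x : X) (s : G), f (act x s) = f x) →
      ∃ c : ℝ, ∀ x : X, f x = c) :
    SecondCountableTopology X := by
  let _ : MulAction Gᵐᵒᵖ X :=
    { smul g x := act x g.unop
      one_smul := h_one
      mul_smul g h x := (h_mul x h.unop g.unop).symm }
  have : ContinuousSMul Gᵐᵒᵖ X :=
    ⟨h_cont.comp (continuous_snd.prodMk (MulOpposite.continuous_unop.comp continuous_fst))⟩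
  have : SecondCountableTopology Gᵐᵒᵖ := MulOpposite.opHomeomorph.symm.secondCountableTopology
  have := MulAction.isPretransitive_of_forall_invariant_eq_const
    (G := Gᵐᵒᵖ) fun f hf => h_erg f fun x s => hf (.op s) x
  exact MulAction.secondCountableTopology_of_isPretransitive (G := Gᵐᵒᵖ)
end

section
/- Let A be a separable C*-algebra, G a second countable compact group, and σ : G → Aut(A) a homomorphism into the *-automorphism group of A such that s ↦ σ_s(a) is norm-continuous for every a ∈ A. Let P be a primitive ideal of A, i.e., P = ker ρ for some irreducible representation ρ of A on a separable complex Hilbert space, and let G_P = {s ∈ G : σ_s(P) = P} be the stability group of P (a closed subgroup of G). Suppose (π, U) is an irreducible covariant representation of (A, G_P, σ) on a separable complex Hilbert space H with ker π = P: π : A → B(H) is a nondegenerate *-homomorphism, U : G_P → B(H) is a strong-operator-continuous homomorphism into the unitary group, U(s)π(a)U(s)* = π(σ_s(a)) for all a ∈ A and s ∈ G_P, and the only bounded operators on H commuting with all π(a) and all U(s) are scalar multiples of the identity. Then π is a homogeneous representation of A: for every nonzero orthogonal projection E ∈ B(H) commuting with π(A), the ideal {a ∈ A : π(a)E = 0}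 equals ker π = P. -/
/-!
For `t ∈ G_P` covariance gives `π x U_t E = U_t π(σ_t⁻¹ x) E`, and the closed span of the
subspaces `U_t E H` is invariant under `π` and `U`, hence all of `H`; so an element `x` with
`π(σ_t⁻¹ x) E = 0` for every `t ∈ G_P` lies in `ker π = P`.

Suppose `π(a) E = 0` with `a = a₀* a₀ ∉ P`. For `s ∈ G_P`, cutting the spectrum of `σ_s a` off at
`‖ρ(σ_s a)‖ / 2` gives `c_s ∉ P` with `π(σ_t⁻¹ c_s) E = 0` for all `t` near `s`, because then
`‖π(σ_t⁻¹ σ_s a) E‖ ≤ ‖σ_s a - σ_t a‖` is small. Finitely many such neighbourhoods cover the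
compact group `G_P`, and since `P = ker ρ` is prime some product `c_{s₁} w₁ c_{s₂} ⋯ c_{sₙ}` is
not in `P`, although it satisfies the condition above for every `t ∈ G_P`.
-/

open scoped CStarAlgebra Pointwise

section HilbertSpace

variable {𝕜 H : Type*} [RCLike 𝕜] [NormedAddCommGroup H] [InnerProductSpace 𝕜 H] [CompleteSpace H]

open ContinuousLinearMap Module End in
theorem Submodule.commute_starProjection (K : Submodule 𝕜 H) [K.HasOrthogonalProjection]
    {R : H →L[𝕜] H} (hR : Set.MapsTo R K K) (hR' : Set.MapsTo ⇑(star R) K K) :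
    Commute K.starProjection R := by
  refine ContinuousLinearMap.coe_injective <|
    (LinearMap.IsIdempotentElem.commute_iff K.isIdempotentElem_starProjection.toLinearMap).mpr
      ⟨?_, ?_⟩
  · simpa [mem_invtSubmodule_iff_mapsTo] using hR
  · rw [Submodule.ker_starProjection]
    refine orthogonal_mem_invtSubmodule ?_
    simpa [mem_invtSubmodule_iff_mapsTo, ← star_eq_adjoint] using hR'

theorem Submodule.eq_bot_or_eq_top_of_irreducible {S : Set (H →L[𝕜] H)}
    (hS_star : ∀ R ∈ S, star R ∈ S)
    (hS_irr : ∀ T : H →L[𝕜] H, (∀ R ∈ S, T * R = R * T) → ∃ c : 𝕜, T = c • 1)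
    {K : Submodule 𝕜 H} (hK : IsClosed (K : Set H)) (hKS : ∀ R ∈ S, Set.MapsTo R K K) :
    K = ⊥ ∨ K = ⊤ := by
  have : CompleteSpace K := hK.completeSpace_coe
  obtain ⟨c, hc⟩ := hS_irr K.starProjection fun R hR =>
    K.commute_starProjection (hKS R hR) (hKS _ (hS_star R hR))
  refine or_iff_not_imp_left.mpr fun hK_ne => ?_
  obtain ⟨x, hxK, hx0⟩ := Submodule.exists_mem_ne_zero_of_ne_bot hK_ne
  have hc_one : c = 1 := smul_left_injective 𝕜 hx0 <| by
    simpa [hc] using K.starProjection_eq_self_iff.mpr hxK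
  refine eq_top_iff'.mpr fun y => K.starProjection_eq_self_iff.mp ?_
  simp [hc, hc_one]

theorem eq_zero_of_forall_mul_eq_zero_of_irreducible {S : Set (H →L[𝕜] H)}
    (hS_star : ∀ R ∈ S, star R ∈ S)
    (hS_irr : ∀ T : H →L[𝕜] H, (∀ R ∈ S, T * R = R * T) → ∃ c : 𝕜, T = c • 1)
    {F : Set (H →L[𝕜] H)} (hF : ∀ R ∈ S, ∀ T ∈ F, ∃ T' ∈ F, ∃ Y, R * T = T' * Y)
    {T₀ : H →L[𝕜] H} (hT₀F : T₀ ∈ F) (hT₀ : T₀ ≠ 0) {X : H →L[𝕜] H}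
    (hX : ∀ T ∈ F, X * T = 0) : X = 0 := by
  set K := Submodule.span 𝕜 (⋃ T ∈ F, Set.range T)
  have hK_mapsTo : ∀ R ∈ S, Set.MapsTo R K K := by
    intro R hR
    refine fun v hv => (Submodule.span_le (p := K.comap (R : H →ₗ[𝕜] H)).mpr ?_) hv
    simp only [Set.iUnion_subset_iff]
    rintro T hT - ⟨ξ, rfl⟩
    obtain ⟨T', hT', Y, hRT⟩ := hF R hR T hT
    have : R (T ξ) = T' (Y ξ) := congr($hRT ξ)
    simpa [this] using Submodule.subset_span (Set.mem_biUnion hT' (Set.mem_range_self (Y ξ)))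
  have hK_ne : K.topologicalClosure ≠ ⊥ := by
    obtain ⟨ξ, hξ⟩ : ∃ ξ, T₀ ξ ≠ 0 := by
      by_contra! h
      exact hT₀ (ContinuousLinearMap.ext h)
    refine fun h => hξ ((Submodule.mem_bot 𝕜).mp (h ▸ K.le_topologicalClosure ?_))
    exact Submodule.subset_span (Set.mem_biUnion hT₀F (Set.mem_range_self ξ))
  have hK_top := (Submodule.eq_bot_or_eq_top_of_irreducible hS_star hS_irr
    K.isClosed_topologicalClosure fun R hR => ?_).resolve_left hK_ne
  · refine ContinuousLinearMap.ext_on (Submodule.dense_iff_topologicalClosure_eq_top.mpr hK_top) ?_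
    simp only [Set.EqOn, Set.mem_iUnion]
    rintro - ⟨T, hT, ξ, rfl⟩
    exact congr($(hX T hT) ξ)
  · simpa only [Submodule.topologicalClosure_coe] using (hK_mapsTo R hR).closure R.continuous

/-- `ker ρ` is a prime ideal. -/
theorem exists_map_mul_mul_ne_zero_of_irreducible {A : Type*}
    [NonUnitalSemiring A] [Star A] [Module 𝕜 A] (ρ : A →⋆ₙₐ[𝕜] (H →L[𝕜] H))
    (hρ_irr : ∀ T : H →L[𝕜] H, (∀ a : A, T * ρ a = ρ a * T) → ∃ c : 𝕜, T = c • 1)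
    {x y : A} (hx : ρ x ≠ 0) (hy : ρ y ≠ 0) : ∃ w, ρ (x * w * y) ≠ 0 := by
  by_contra! h
  refine hx (eq_zero_of_forall_mul_eq_zero_of_irreducible (S := Set.range ρ)
    (F := Set.range fun w => ρ (w * y)) ?_ ?_ ?_ (Set.mem_range_self (star y)) ?_ ?_)
  · rintro - ⟨b, rfl⟩
    exact ⟨star b, map_star ρ b⟩
  · exact fun T hT => hρ_irr T fun a => hT (ρ a) (Set.mem_range_self a)
  · rintro - ⟨b, rfl⟩ - ⟨w, rfl⟩
    exact ⟨ρ (b * w * y), Set.mem_range_self (b * w), 1, by simp [mul_assoc]⟩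
  · rw [map_mul, map_star]
    exact fun h => hy ((CStarRing.star_mul_self_eq_zero_iff _).mp h)
  · rintro - ⟨w, rfl⟩
    simpa [mul_assoc] using h w

theorem eq_zero_of_forall_map_smul_mul_eq_zero_of_irreducible {G A : Type*} [Group G]
    [NonUnitalNonAssocSemiring A] [Star A] [Module 𝕜 A] [MulAction G A] (Γ : Subgroup G)
    (π : A →⋆ₙₐ[𝕜] (H →L[𝕜] H)) (U : G → (H →L[𝕜] H))
    (hU_unitary : ∀ s ∈ Γ, U s ∈ unitary (H →L[𝕜] H)) (hU_one : U 1 = 1)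
    (hU_mul : ∀ s ∈ Γ, ∀ t ∈ Γ, U (s * t) = U s * U t)
    (h_cov : ∀ s ∈ Γ, ∀ a : A, U s * π a * star (U s) = π (s • a))
    (h_irr : ∀ T : H →L[𝕜] H, (∀ a : A, T * π a = π a * T) →
      (∀ s ∈ Γ, T * U s = U s * T) → ∃ c : 𝕜, T = c • 1)
    {E : H →L[𝕜] H} (hE : E ≠ 0) (hE_comm : ∀ a, E * π a = π a * E)
    {x : A} (hx : ∀ t ∈ Γ, π (t⁻¹ • x) * E = 0) : π x = 0 := by
  have hU_star : ∀ t ∈ Γ, star (U t) = U t⁻¹ := fun t ht =>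
    left_inv_eq_right_inv (Unitary.star_mul_self_of_mem (hU_unitary t ht))
      (by rw [← hU_mul t ht t⁻¹ (Γ.inv_mem ht), mul_inv_cancel, hU_one])
  have h_cov' : ∀ t ∈ Γ, ∀ a : A, π a * U t = U t * π (t⁻¹ • a) := fun t ht a => by
    rw [← smul_inv_smul t a, ← h_cov t ht, mul_assoc _ (star (U t)),
      Unitary.star_mul_self_of_mem (hU_unitary t ht), mul_one, smul_inv_smul]
  refine eq_zero_of_forall_mul_eq_zero_of_irreducible (S := Set.range π ∪ U '' Γ)
    (F := (fun t => U t * E) '' Γ) ?_ ?_ ?_ (Set.mem_image_of_mem _ Γ.one_mem) ?_ ?_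
  · rintro - (⟨a, rfl⟩ | ⟨t, ht, rfl⟩)
    · exact Or.inl ⟨star a, map_star π a⟩
    · exact Or.inr ⟨t⁻¹, Γ.inv_mem ht, (hU_star t ht).symm⟩
  · exact fun T hT => h_irr T (fun a => hT _ (Or.inl (Set.mem_range_self a)))
      fun s hs => hT _ (Or.inr (Set.mem_image_of_mem U hs))
  · rintro - (⟨a, rfl⟩ | ⟨s, hs, rfl⟩) - ⟨t, ht, rfl⟩
    · refine ⟨U t * E, Set.mem_image_of_mem _ ht, π (t⁻¹ • a), ?_⟩
      rw [← mul_assoc, h_cov' t ht, mul_assoc, ← hE_comm, ← mul_assoc]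
    · refine ⟨U (s * t) * E, Set.mem_image_of_mem _ (Γ.mul_mem hs ht), 1, ?_⟩
      rw [hU_mul s hs t ht, mul_one, mul_assoc]
  · simpa [hU_one] using hE
  · rintro - ⟨t, ht, rfl⟩
    rw [← mul_assoc, h_cov' t ht, mul_assoc, hx t ht, mul_zero]

end HilbertSpace

def NonUnitalStarAlgHom.compress {R A B : Type*} [CommSemiring R] [NonUnitalNonAssocSemiring A]
    [Module R A] [Star A] [NonUnitalSemiring B] [StarRing B] [Module R B] [IsScalarTower R B B]
    (π : A →⋆ₙₐ[R] B) {E : B} (hE : IsStarProjection E) (hE_comm : ∀ a, E * π a = π a * E) :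
    A →⋆ₙₐ[R] B where
  toFun a := π a * E
  map_smul' c a := by simp [smul_mul_assoc]
  map_zero' := by simp
  map_add' a b := by simp [add_mul]
  map_mul' a b := by
    simp only [map_mul]
    rw [mul_assoc, mul_assoc, ← hE_comm b, ← mul_assoc E, hE.isIdempotentElem.eq]
  map_star' a := by
    rw [star_mul, hE.isSelfAdjoint.star_eq, ← map_star, hE_comm]

def cutoff (ε x : ℝ) : ℝ := max (|x| - ε) 0

theorem continuous_cutoff (ε : ℝ) : Continuous (cutoff ε) := by
  unfold cutoff; fun_prop

theorem cutoff_zero {ε : ℝ} (hε : 0 ≤ ε) : cutoff ε 0 = 0 := by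
  simp [cutoff, hε]

section CStarAlgebra

variable {A B C : Type*} [NonUnitalCStarAlgebra A] [NonUnitalCStarAlgebra B]
  [NonUnitalCStarAlgebra C]

theorem norm_le_norm_cfcₙ_cutoff_add {z : A} (hz : IsSelfAdjoint z) {ε : ℝ} (hε : 0 ≤ ε) :
    ‖z‖ ≤ ‖cfcₙ (cutoff ε) z‖ + ε := by
  have hcont := (continuous_cutoff ε).continuousOn (s := quasispectrum ℝ z)
  conv_lhs => rw [← cfcₙ_id' ℝ z]
  refine norm_cfcₙ_le fun x hx => ?_
  have := norm_apply_le_norm_cfcₙ (cutoff ε) z hx hcont (cutoff_zero hε)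
  rw [Real.norm_eq_abs] at this ⊢
  have : |x| - ε ≤ |cutoff ε x| := (le_max_left _ _).trans (le_abs_self _)
  linarith

theorem cfcₙ_cutoff_eq_zero {z : A} (hz : IsSelfAdjoint z) {ε : ℝ} (hzε : ‖z‖ ≤ ε) :
    cfcₙ (cutoff ε) z = 0 := by
  have hε : 0 ≤ ε := (norm_nonneg z).trans hzε
  refine norm_le_zero_iff.mp (norm_cfcₙ_le fun x hx => ?_)
  have hx : ‖x‖ ≤ ‖z‖ := by
    simpa [cfcₙ_id ℝ z] using norm_apply_le_norm_cfcₙ id z hx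
  simp only [cutoff, Real.norm_eq_abs] at hx ⊢
  rw [max_eq_right (by linarith), abs_zero]

theorem exists_map_ne_zero_forall_map_eq_zero_of_norm_sub_le (ρ : A →⋆ₙₐ[ℂ] B) {a : A}
    (ha : IsSelfAdjoint a) (hρa : ρ a ≠ 0) :
    ∃ c, ρ c ≠ 0 ∧ ∀ (ψ : A →⋆ₙₐ[ℂ] C) (b : A), ψ b = 0 → ‖b - a‖ ≤ ‖ρ a‖ / 2 → ψ c = 0 := by
  have hr : 0 ≤ ‖ρ a‖ / 2 := by positivity
  refine ⟨cfcₙ (cutoff (‖ρ a‖ / 2)) a, fun h => hρa ?_, fun ψ b hψb hab => ?_⟩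
  · rw [NonUnitalStarAlgHomClass.map_cfcₙ ρ _ a (continuous_cutoff _).continuousOn
      (cutoff_zero hr)] at h
    have := norm_le_norm_cfcₙ_cutoff_add (ha.map ρ) hr
    rw [h, norm_zero] at this
    exact norm_eq_zero.mp (by linarith [norm_nonneg (ρ a)])
  · rw [NonUnitalStarAlgHomClass.map_cfcₙ ψ _ a (continuous_cutoff _).continuousOn
      (cutoff_zero hr)]
    refine cfcₙ_cutoff_eq_zero (ha.map ψ) ?_
    calc ‖ψ a‖ = ‖ψ (a - b)‖ := by simp [hψb]
      _ ≤ ‖a - b‖ := NonUnitalStarAlgHom.norm_apply_le ψ _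
      _ ≤ ‖ρ a‖ / 2 := by rwa [norm_sub_rev]

theorem IsCompact.exists_map_ne_zero_forall_map_eq_zero {X : Type*} [TopologicalSpace X]
    {Γ : Set X} (hΓ : IsCompact Γ) (hΓ_ne : Γ.Nonempty) (ρ : A →⋆ₙₐ[ℂ] B)
    (hρ_prime : ∀ x y, ρ x ≠ 0 → ρ y ≠ 0 → ∃ w, ρ (x * w * y) ≠ 0)
    (ψ : X → A →⋆ₙₐ[ℂ] C) {a : X → A} (ha : ContinuousOn a Γ)
    (ha_sa : ∀ t ∈ Γ, IsSelfAdjoint (a t)) (hρa : ∀ t ∈ Γ, ρ (a t) ≠ 0)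
    (hψa : ∀ t ∈ Γ, ψ t (a t) = 0) : ∃ x, ρ x ≠ 0 ∧ ∀ t ∈ Γ, ψ t x = 0 := by
  refine hΓ.induction_on (p := fun T => ∃ x, ρ x ≠ 0 ∧ ∀ t ∈ T, ψ t x = 0) ?_ ?_ ?_ ?_
  · obtain ⟨s, hs⟩ := hΓ_ne
    exact ⟨a s, hρa s hs, by simp⟩
  · exact fun T T' hTT' ⟨x, hx, hxT'⟩ => ⟨x, hx, fun t ht => hxT' t (hTT' ht)⟩
  · rintro T T' ⟨x, hx, hxT⟩ ⟨y, hy, hyT'⟩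
    obtain ⟨w, hw⟩ := hρ_prime x y hx hy
    refine ⟨x * w * y, hw, ?_⟩
    rintro t (ht | ht)
    · simp [hxT t ht]
    · simp [hyT' t ht]
  · intro s hs
    obtain ⟨c, hc, hψc⟩ :=
      exists_map_ne_zero_forall_map_eq_zero_of_norm_sub_le ρ (C := C) (ha_sa s hs) (hρa s hs)
    have hball := ha s hs (Metric.ball_mem_nhds (a s) (half_pos (norm_pos_iff.mpr (hρa s hs))))
    refine ⟨Γ ∩ a ⁻¹' Metric.ball (a s) (‖ρ (a s)‖ / 2),
      Filter.inter_mem self_mem_nhdsWithin hball, c, hc, fun t ht => ?_⟩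
    exact hψc (ψ t) (a t) (hψa t ht.1) (by simpa [dist_eq_norm] using (Metric.mem_ball.mp ht.2).le)

end CStarAlgebra

theorem MulAction.isClosed_stabilizer {G Y : Type*} [Group G] [TopologicalSpace G]
    [ContinuousInv G] [TopologicalSpace Y] [MulAction G Y]
    (hcont : ∀ y : Y, Continuous fun s : G => s • y) {P : Set Y} (hP : IsClosed P) :
    IsClosed (stabilizer G P : Set G) := by
  have hsub : IsClosed {s : G | s • P ⊆ P} := by
    simp only [Set.smul_set_subset_iff, Set.ofPred_forall]
    exact isClosed_biInter fun p _ => hP.preimage (hcont p)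
  have : (stabilizer G P : Set G) = {s | s • P ⊆ P} ∩ Inv.inv ⁻¹' {s | s • P ⊆ P} := by
    ext s
    simp [mem_stabilizer_iff, subset_antisymm_iff, Set.subset_smul_set_iff]
  rw [this]
  exact hsub.inter (hsub.preimage continuous_inv)

theorem homogeneous_of_irreducible_covariant_rep_of_stability_group_general
    -- the C*-algebra A, separable
    {A : Type*} [NonUnitalNormedRing A] [StarRing A] [CStarRing A]
    [NormedSpace ℂ A] [IsScalarTower ℂ A A] [SMulCommClass ℂ A A]
    [StarModule ℂ A] [CompleteSpace A]
    -- the compact second countable group G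
    {G : Type*} [Group G] [TopologicalSpace G] [IsTopologicalGroup G]
    [CompactSpace G]
    -- the point-norm continuous action σ of G on A
    (σ : G → (A ≃⋆ₐ[ℂ] A))
    (hσ_one : ∀ a : A, σ 1 a = a)
    (hσ_mul : ∀ (s t : G) (a : A), σ (s * t) a = σ s (σ t a))
    (hσ_cont : ∀ a : A, Continuous fun s : G => σ s a)
    -- P is a primitive ideal: the kernel of an irreducible representation ρ
    (P : Set A)
    {H' : Type*} [NormedAddCommGroup H'] [InnerProductSpace ℂ H']
    [CompleteSpace H']
    (ρ : A →⋆ₙₐ[ℂ] (H' →L[ℂ] H'))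
    (hρ_irr : ∀ T : H' →L[ℂ] H', (∀ a : A, T * ρ a = ρ a * T) →
      ∃ c : ℂ, T = c • (1 : H' →L[ℂ] H'))
    (hP : P = {a : A | ρ a = 0})
    -- the covariant representation (π, U) of (A, G_P, σ) on H with ker π = P,
    -- where G_P = {s : G | σ s '' P = P} is the stability group of P
    {H : Type*} [NormedAddCommGroup H] [InnerProductSpace ℂ H] [CompleteSpace H]
    (π : A →⋆ₙₐ[ℂ] (H →L[ℂ] H))
    (h_ker : {a : A | π a = 0} = P)
    (U : G → (H →L[ℂ] H))
    (hU_unitary : ∀ s ∈ {s : G | σ s '' P = P}, U s ∈ unitary (H →L[ℂ] H))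
    (hU_one : U 1 = 1)
    (hU_mul : ∀ s ∈ {s : G | σ s '' P = P}, ∀ t ∈ {s : G | σ s '' P = P},
      U (s * t) = U s * U t)
    (h_cov : ∀ s ∈ {s : G | σ s '' P = P}, ∀ a : A,
      U s * π a * star (U s) = π (σ s a))
    (h_irr : ∀ T : H →L[ℂ] H, (∀ a : A, T * π a = π a * T) →
      (∀ s ∈ {s : G | σ s '' P = P}, T * U s = U s * T) →
      ∃ c : ℂ, T = c • (1 : H →L[ℂ] H)) :
    -- conclusion: π is homogeneous
    ∀ E : H →L[ℂ] H, IsSelfAdjoint E → IsIdempotentElem E → E ≠ 0 →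
      (∀ a : A, E * π a = π a * E) → {a : A | π a * E = 0} = P := by
  intro E hE_sa hE_idem hE_ne hE_comm
  let : NonUnitalCStarAlgebra A := {}
  -- For this action `MulAction.stabilizer G P` unfolds to the set `{s | σ s '' P = P}` of the
  -- hypotheses.
  let : MulAction G A := { smul s a := σ s a, one_smul := hσ_one, mul_smul := hσ_mul }
  subst hP
  have hker : ∀ a, π a = 0 ↔ ρ a = 0 := fun a => Set.ext_iff.mp h_ker a
  let Γ := MulAction.stabilizer G {a : A | ρ a = 0}
  have hΓ_compact : IsCompact (Γ : Set G) := (MulAction.isClosed_stabilizer hσ_cont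
    (isClosed_eq (map_continuous ρ) continuous_const)).isCompact
  refine subset_antisymm (fun a₀ (ha₀ : π a₀ * E = 0) => ?_) fun a ha => ?_
  · by_contra hρa₀
    set a := star a₀ * a₀
    have hρa : ∀ t ∈ Γ, ρ (σ t a) ≠ 0 := fun t ht h => hρa₀ <| by
      have h' := (MulAction.mem_stabilizer_set.mp ht a).mp h
      rw [Set.mem_ofPred_eq, map_mul, map_star] at h'
      exact (CStarRing.star_mul_self_eq_zero_iff _).mp h'
    have hπa : ∀ t, π (σ t⁻¹ (σ t a)) * E = 0 := fun t => by
      rw [← hσ_mul, inv_mul_cancel, hσ_one, map_mul, mul_assoc, ha₀, mul_zero]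
    obtain ⟨x, hρx, hx⟩ := hΓ_compact.exists_map_ne_zero_forall_map_eq_zero ⟨1, Γ.one_mem⟩ ρ
      (fun x y => exists_map_mul_mul_ne_zero_of_irreducible ρ hρ_irr)
      (fun t => (π.compress ⟨hE_idem, hE_sa⟩ hE_comm).comp (σ t⁻¹ : A →⋆ₙₐ[ℂ] A))
      (hσ_cont a).continuousOn
      (fun t _ => by simpa only [a, map_mul, map_star] using .star_mul_self _) hρa
      fun t _ => hπa t
    exact hρx ((hker x).mp (eq_zero_of_forall_map_smul_mul_eq_zero_of_irreducible Γ π U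
      hU_unitary hU_one hU_mul h_cov h_irr hE_ne hE_comm hx))
  · simp [(hker a).mpr ha]

/-- **Homogeneity of the C*-algebra part of irreducible covariant
representations of stability subsystems.**  Let `(A, G, σ)` be a separable
C*-dynamical system with `G` second countable compact.  Let `P = ker ρ` be a
primitive ideal of `A` (`ρ` an irreducible representation on a separable
Hilbert space), with stability group `G_P = {s : G | σ_s(P) = P}`.  If `(π, U)`
is an irreducible covariant representation of `(A, G_P, σ)` on a separable
Hilbert space `H` with `ker π = P`, then `π` is homogeneous: for every nonzero
orthogonal projection `E` commuting with `π(A)`, the kernel of the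
subrepresentation `π^E` equals `P`. -/
theorem homogeneous_of_irreducible_covariant_rep_of_stability_group
    -- the C*-algebra A, separable
    {A : Type*} [NonUnitalNormedRing A] [StarRing A] [CStarRing A]
    [NormedSpace ℂ A] [IsScalarTower ℂ A A] [SMulCommClass ℂ A A]
    [StarModule ℂ A] [CompleteSpace A] [TopologicalSpace.SeparableSpace A]
    -- the compact second countable group G
    {G : Type*} [Group G] [TopologicalSpace G] [IsTopologicalGroup G]
    [CompactSpace G] [SecondCountableTopology G]
    -- the point-norm continuous action σ of G on A
    (σ : G → (A ≃⋆ₐ[ℂ] A))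
    (hσ_one : ∀ a : A, σ 1 a = a)
    (hσ_mul : ∀ (s t : G) (a : A), σ (s * t) a = σ s (σ t a))
    (hσ_cont : ∀ a : A, Continuous fun s : G => σ s a)
    -- P is a primitive ideal: the kernel of an irreducible representation ρ
    (P : Set A)
    {H' : Type*} [NormedAddCommGroup H'] [InnerProductSpace ℂ H']
    [CompleteSpace H'] [TopologicalSpace.SeparableSpace H']
    (ρ : A →⋆ₙₐ[ℂ] (H' →L[ℂ] H'))
    (hρ_nondeg : Dense ((Submodule.span ℂ {x : H' | ∃ (a : A) (ξ : H'), ρ a ξ = x} :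
      Submodule ℂ H') : Set H'))
    (hρ_irr : ∀ T : H' →L[ℂ] H', (∀ a : A, T * ρ a = ρ a * T) →
      ∃ c : ℂ, T = c • (1 : H' →L[ℂ] H'))
    (hP : P = {a : A | ρ a = 0})
    -- the covariant representation (π, U) of (A, G_P, σ) on H with ker π = P,
    -- where G_P = {s : G | σ s '' P = P} is the stability group of P
    {H : Type*} [NormedAddCommGroup H] [InnerProductSpace ℂ H] [CompleteSpace H]
    [TopologicalSpace.SeparableSpace H]
    (π : A →⋆ₙₐ[ℂ] (H →L[ℂ] H))
    (h_nondeg : Dense ((Submodule.span ℂ {x : H | ∃ (a : A) (ξ : H), π a ξ = x} :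
      Submodule ℂ H) : Set H))
    (h_ker : {a : A | π a = 0} = P)
    (U : G → (H →L[ℂ] H))
    (hU_unitary : ∀ s ∈ {s : G | σ s '' P = P}, U s ∈ unitary (H →L[ℂ] H))
    (hU_one : U 1 = 1)
    (hU_mul : ∀ s ∈ {s : G | σ s '' P = P}, ∀ t ∈ {s : G | σ s '' P = P},
      U (s * t) = U s * U t)
    (hU_sot : ∀ ξ : H, ContinuousOn (fun s : G => U s ξ) {s : G | σ s '' P = P})
    (h_cov : ∀ s ∈ {s : G | σ s '' P = P}, ∀ a : A,
      U s * π a * star (U s) = π (σ s a))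
    (h_irr : ∀ T : H →L[ℂ] H, (∀ a : A, T * π a = π a * T) →
      (∀ s ∈ {s : G | σ s '' P = P}, T * U s = U s * T) →
      ∃ c : ℂ, T = c • (1 : H →L[ℂ] H)) :
    -- conclusion: π is homogeneous
    ∀ E : H →L[ℂ] H, IsSelfAdjoint E → IsIdempotentElem E → E ≠ 0 →
      (∀ a : A, E * π a = π a * E) → {a : A | π a * E = 0} = P :=
  homogeneous_of_irreducible_covariant_rep_of_stability_group_general σ hσ_one hσ_mul hσ_cont P ρ
    hρ_irr hP π h_ker U hU_unitary hU_one hU_mul h_cov h_irr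
end
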